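/- arXiv:1609.09648 — 4 statements merged into one kernel-verified Lean document; each statement's English description precedes it below -/
import Mathlib

section
/- Let V = C₀(K, ℂ) with triple product {x,y,z} = x conj(y) z, let a ∈ V, and let (ρ_γ) be a net of triple homomorphisms V → ℂ and ρ a triple homomorphism with ρ(a) ≠ 0. If ρ_γ(w) → ρ(w) for every w of the form a·conj(a)·v (v ∈ V) and ρ_γ(a) → ρ(a), then ρ_γ(v) → ρ(v) for every v ∈ V. -/
/-!
Since `a ⬝ conj a ⬝ v` is a triple product, a triple homomorphism `σ` satisfies
`σ(a ⬝ conj a ⬝ v) = |σ a|² σ v`. So `ρ_γ v` is the quotient of `ρ_γ(a ⬝ conj a ⬝ v)` by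
`|ρ_γ a|²`, and both converge, the limit of the denominator being `|ρ a|² ≠ 0`.
-/

open scoped ZeroAtInfty
open Filter

theorem Filter.Tendsto.of_mul_left₀ {α G₀ : Type*} [CommGroupWithZero G₀] [TopologicalSpace G₀]
    [ContinuousInv₀ G₀] [ContinuousMul G₀] [T1Space G₀] {l : Filter α} {c x : α → G₀} {c₀ x₀ : G₀}
    (hc : Tendsto c l (nhds c₀)) (hc₀ : c₀ ≠ 0) (hcx : Tendsto (fun i => c i * x i) l (nhds (c₀ * x₀))) :
    Tendsto x l (nhds x₀) := by
  have hquot := hcx.div hc hc₀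
  rw [mul_div_cancel_left₀ x₀ hc₀] at hquot
  refine hquot.congr' ?_
  filter_upwards [hc.eventually_ne hc₀] with i hi
  exact mul_div_cancel_left₀ (x i) hi

section TripleHom

variable {V 𝕜 : Type*} [Mul V] [Star V] [Field 𝕜] [StarRing 𝕜]

def IsTripleHom (f : V → 𝕜) : Prop :=
  ∀ x y z, f (x * star y * z) = f x * star (f y) * f z

theorem tendsto_apply_of_tendsto_apply_mul_star_self_mul [TopologicalSpace 𝕜]
    [IsTopologicalDivisionRing 𝕜] [ContinuousStar 𝕜] [T1Space 𝕜]
    {ι : Type*} {l : Filter ι} {fs : ι → V → 𝕜} {f : V → 𝕜}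
    (hfs : ∀ i, IsTripleHom (fs i)) (hf : IsTripleHom f) {a : V} (ha : f a ≠ 0)
    (hconva : Tendsto (fun i => fs i a) l (nhds (f a))) (v : V)
    (hconv : Tendsto (fun i => fs i (a * star a * v)) l (nhds (f (a * star a * v)))) :
    Tendsto (fun i => fs i v) l (nhds (f v)) := by
  refine (hconva.mul hconva.star).of_mul_left₀ (mul_ne_zero ha (star_ne_zero.mpr ha)) ?_
  simpa only [hfs _ a a v, hf a a v] using hconv

end TripleHom

theorem stmt_10_general {K : Type*} [TopologicalSpace K]
    {ι : Type*} (l : Filter ι)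
    (ρs : ι → (C₀(K, ℂ) →ₗ[ℂ] ℂ)) (ρ : C₀(K, ℂ) →ₗ[ℂ] ℂ)
    (hρs : ∀ γ, ∀ x y z : C₀(K, ℂ),
      ρs γ (x * star y * z) = ρs γ x * (starRingEnd ℂ) (ρs γ y) * ρs γ z)
    (hρ : ∀ x y z : C₀(K, ℂ),
      ρ (x * star y * z) = ρ x * (starRingEnd ℂ) (ρ y) * ρ z)
    (a : C₀(K, ℂ)) (hne : ρ a ≠ 0)
    (hconv : ∀ v : C₀(K, ℂ),
      Tendsto (fun γ => ρs γ (a * star a * v)) l (nhds (ρ (a * star a * v))))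
    (hconva : Tendsto (fun γ => ρs γ a) l (nhds (ρ a))) :
    ∀ v : C₀(K, ℂ), Tendsto (fun γ => ρs γ v) l (nhds (ρ v)) := fun v =>
  tendsto_apply_of_tendsto_apply_mul_star_self_mul (fs := fun γ => ρs γ) hρs hρ hne hconva v
    (hconv v)

/-- If a net of triple homomorphisms `ρ_γ : C₀(K, ℂ) → ℂ` converges to a triple
homomorphism `ρ` with `ρ a ≠ 0` on `a` and on all elements `a ⬝ conj a ⬝ v`,
then `ρ_γ(v) → ρ(v)` for every `v`. -/
theorem stmt_10 {K : Type*} [TopologicalSpace K] [LocallyCompactSpace K] [T2Space K]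
    {ι : Type*} (l : Filter ι) [l.NeBot]
    (ρs : ι → (C₀(K, ℂ) →ₗ[ℂ] ℂ)) (ρ : C₀(K, ℂ) →ₗ[ℂ] ℂ)
    (hρs : ∀ γ, ∀ x y z : C₀(K, ℂ),
      ρs γ (x * star y * z) = ρs γ x * (starRingEnd ℂ) (ρs γ y) * ρs γ z)
    (hρ : ∀ x y z : C₀(K, ℂ),
      ρ (x * star y * z) = ρ x * (starRingEnd ℂ) (ρ y) * ρ z)
    (a : C₀(K, ℂ)) (hne : ρ a ≠ 0)
    (hconv : ∀ v : C₀(K, ℂ),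
      Tendsto (fun γ => ρs γ (a * star a * v)) l (nhds (ρ (a * star a * v))))
    (hconva : Tendsto (fun γ => ρs γ a) l (nhds (ρ a))) :
    ∀ v : C₀(K, ℂ), Tendsto (fun γ => ρs γ v) l (nhds (ρ v)) :=
  stmt_10_general l ρs ρ hρs hρ a hne hconv hconva
end

section
/- Let V be a complex Banach space and K ⊆ V* ∖ {0} a set of functionals such that K ∪ {0} is weak*-compact and αω ∈ K for all α ∈ 𝕋, ω ∈ K. Suppose K is the disjoint union over λ ∈ Λ of sets 𝕋·X_λ, where each X_λ ∪ {0} is weak*-compact, each 𝕋·X_λ is relatively weak*-open in K ∪ {0}, and for each λ there is v_λ ∈ V with ρ(v_λ) = 1 for all ρ ∈ X_λ. Define C_σ(K) as the space of weak*-continuous functions f : K → ℂ vanishing at 0 (i.e. extending continuously by 0 to K ∪ {0}) with f(αω) = α f(ω). Then the map f ↦ (f|_{X_λ})_{λ ∈ Λ} is an injective linear isometry from C_σ(K) into the c₀-sum ⊕^{c₀}_{λ} C_b(X_λ) of the spaces of bounded weak*-continuous functions on X_λ with sup norms. -/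
open Filter

/-- The circle orbit `𝕋 · X` of a set of functionals. -/
def TOrbit {V : Type*} [NormedAddCommGroup V] [NormedSpace ℂ V]
    (X : Set (WeakDual ℂ V)) : Set (WeakDual ℂ V) :=
  {ω | ∃ α : ℂ, ‖α‖ = 1 ∧ ∃ ρ ∈ X, ω = α • ρ}

/-- `f` belongs to `C_σ(K)`: weak*-continuous on `K ∪ {0}` (i.e. extends
continuously by `0` to the one-point compactification), vanishes at `0`, and
is `𝕋`-equivariant on `K`. -/
def IsCSigmaFun {V : Type*} [NormedAddCommGroup V] [NormedSpace ℂ V]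
    (K : Set (WeakDual ℂ V)) (f : WeakDual ℂ V → ℂ) : Prop :=
  ContinuousOn f (K ∪ {0}) ∧ f 0 = 0 ∧
    ∀ α : ℂ, ‖α‖ = 1 → ∀ ω ∈ K, f (α • ω) = α * f ω

/-- Given `K ⊆ V* \ {0}` with `K ∪ {0}` weak*-compact, `𝕋`-invariant,
partitioned into relatively open pieces `𝕋·X_λ` with `X_λ ∪ {0}` weak*-compact
and witnesses `v_λ` with `ρ(v_λ) = 1` on `X_λ`, the restriction map
`f ↦ (f|_{X_λ})_λ` on `C_σ(K)` takes values in the c₀-sum of the spaces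
`C_b(X_λ)` (the family of sup-norms lies in `c₀(Λ)`), is isometric
(the sup of `|f|` over `K` equals the sup over `⋃ λ, X_λ`), and is injective. -/
theorem stmt_14 {V : Type*} [NormedAddCommGroup V] [NormedSpace ℂ V]
    {Λ : Type*} (K : Set (WeakDual ℂ V))
    (h0K : (0 : WeakDual ℂ V) ∉ K)
    (hKcpt : IsCompact (K ∪ {0}))
    (hKinv : ∀ α : ℂ, ‖α‖ = 1 → ∀ ω ∈ K, α • ω ∈ K)
    (X : Λ → Set (WeakDual ℂ V))
    (hXK : K = ⋃ l, TOrbit (X l))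
    (hdisj : Pairwise fun l l' => Disjoint (TOrbit (X l)) (TOrbit (X l')))
    (hXcpt : ∀ l, IsCompact (X l ∪ {0}))
    (hXopen : ∀ l, ∃ U : Set (WeakDual ℂ V),
      IsOpen U ∧ TOrbit (X l) = U ∩ (K ∪ {0}))
    (v : Λ → V) (hv : ∀ l, ∀ ρ ∈ X l, ρ (v l) = 1) :
    ∀ f g : WeakDual ℂ V → ℂ, IsCSigmaFun K f → IsCSigmaFun K g →
      (∀ ε > 0, {l : Λ | ∃ ρ ∈ X l, ε ≤ ‖f ρ‖}.Finite) ∧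
      sSup ((fun ω => ‖f ω‖) '' K) = sSup ((fun ω => ‖f ω‖) '' ⋃ l, X l) ∧
      ((∀ l, Set.EqOn f g (X l)) → Set.EqOn f g K) := by

  intro f g hf hg
  have hsub : ∀ l, X l ⊆ K := by
    intro l ρ hρ
    rw [hXK]
    exact Set.mem_iUnion.2 ⟨l, ⟨1, by simp, ρ, hρ, (one_smul ℂ ρ).symm⟩⟩
  refine ⟨?_, ?_, ?_⟩
  · -- finiteness
    intro ε hε
    set A : Set (WeakDual ℂ V) := (K ∪ {0}) ∩ {ω | ε ≤ ‖f ω‖} with hA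
    have hAcpt : IsCompact A := by
      haveI : CompactSpace ↥(K ∪ {0}) := isCompact_iff_compactSpace.1 hKcpt
      have hc : Continuous fun x : ↥(K ∪ {0}) => ‖f x.1‖ :=
        (continuousOn_iff_continuous_restrict.1 hf.1).norm
      have hcl : IsClosed {x : ↥(K ∪ {0}) | ε ≤ ‖f x.1‖} :=
        isClosed_le continuous_const hc
      have : A = Subtype.val '' {x : ↥(K ∪ {0}) | ε ≤ ‖f x.1‖} := by
        ext x
        simp [hA, Set.mem_image, and_comm]
      rw [this]
      exact (hcl.isCompact).image continuous_subtype_val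
    choose U hUopen hUeq using hXopen
    have hAcover : A ⊆ ⋃ l, U l := by
      intro x hx
      have hxK : x ∈ K := by
        rcases hx.1 with h | h
        · exact h
        · exfalso
          simp only [Set.mem_singleton_iff] at h
          subst h
          have := hx.2
          simp only [Set.mem_setOf_eq, hf.2.1] at this
          simpa using lt_of_lt_of_le hε this
      rw [hXK] at hxK
      rcases Set.mem_iUnion.1 hxK with ⟨l, hl⟩
      have : x ∈ U l ∩ (K ∪ {0}) := (hUeq l) ▸ hl
      exact Set.mem_iUnion.2 ⟨l, this.1⟩
    rcases hAcpt.elim_finite_subcover U hUopen hAcover with ⟨t, ht⟩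
    refine Set.Finite.subset t.finite_toSet ?_
    rintro l ⟨ρ, hρ, hρε⟩
    have hρA : ρ ∈ A := ⟨Or.inl (hsub l hρ), hρε⟩
    rcases Set.mem_iUnion₂.1 (ht hρA) with ⟨l', hl't, hl'⟩
    have hρorb' : ρ ∈ TOrbit (X l') := by
      rw [hUeq l']
      exact ⟨hl', Or.inl (hsub l hρ)⟩
    have hρorb : ρ ∈ TOrbit (X l) := ⟨1, by simp, ρ, hρ, (one_smul ℂ ρ).symm⟩
    by_cases h : l = l'
    · simpa [h] using hl't
    · exact absurd hρorb' (Set.disjoint_left.1 (hdisj h) hρorb)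
  · -- isometry
    congr 1
    ext r
    constructor
    · rintro ⟨ω, hω, rfl⟩
      rw [hXK] at hω
      rcases Set.mem_iUnion.1 hω with ⟨l, α, hα, ρ, hρ, rfl⟩
      refine ⟨ρ, Set.mem_iUnion.2 ⟨l, hρ⟩, ?_⟩
      show ‖f ρ‖ = ‖f (α • ρ)‖
      rw [hf.2.2 α hα ρ (hsub l hρ)]
      simp [hα]
    · rintro ⟨ρ, hρ, rfl⟩
      rcases Set.mem_iUnion.1 hρ with ⟨l, hl⟩
      exact ⟨ρ, hsub l hl, rfl⟩
  · -- injectivity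
    intro heq ω hω
    have hω' := hω
    rw [hXK] at hω'
    rcases Set.mem_iUnion.1 hω' with ⟨l, α, hα, ρ, hρ, rfl⟩
    rw [hf.2.2 α hα ρ (hsub l hρ), hg.2.2 α hα ρ (hsub l hρ), heq l hρ]
end

section
/- Under the hypotheses of the previous statement, the map f ↦ (f|_{X_λ}) from C_σ(K) to ⊕^{c₀}_λ C_b(X_λ) is surjective onto the tuples (g_λ) such that each g_λ extends to a continuous function on the weak*-compact set X_λ ∪ {0} vanishing at 0: given such (g_λ) with (‖g_λ‖) ∈ c₀(Λ), the function f defined by f(αρ) = α g_λ(ρ) for ρ ∈ X_λ, α ∈ 𝕋 is well-defined, 𝕋-equivariant, weak*-continuous on K, and vanishes at infinity. -/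
open Filter

/-- Surjectivity of the restriction map: given a `c₀`-family `(g_λ)` with each
`g_λ` continuous on `X_λ ∪ {0}` and vanishing at `0`, the 𝕋-equivariant
extension `f(αρ) = α g_λ(ρ)` is well-defined and yields an element of
`C_σ(K)` restricting to every `g_λ`. -/
theorem stmt_15 {V : Type*} [NormedAddCommGroup V] [NormedSpace ℂ V]
    {Λ : Type*} (K : Set (WeakDual ℂ V))
    (h0K : (0 : WeakDual ℂ V) ∉ K)
    (hKcpt : IsCompact (K ∪ {0}))
    (hKinv : ∀ α : ℂ, ‖α‖ = 1 → ∀ ω ∈ K, α • ω ∈ K)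
    (X : Λ → Set (WeakDual ℂ V))
    (hXK : K = ⋃ l, TOrbit (X l))
    (hdisj : Pairwise fun l l' => Disjoint (TOrbit (X l)) (TOrbit (X l')))
    (hXcpt : ∀ l, IsCompact (X l ∪ {0}))
    (hXopen : ∀ l, ∃ U : Set (WeakDual ℂ V),
      IsOpen U ∧ TOrbit (X l) = U ∩ (K ∪ {0}))
    (v : Λ → V) (hv : ∀ l, ∀ ρ ∈ X l, ρ (v l) = 1)
    (g : Λ → WeakDual ℂ V → ℂ)
    (hgcont : ∀ l, ContinuousOn (g l) (X l ∪ {0}))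
    (hg0 : ∀ l, g l 0 = 0)
    (hgc0 : ∀ ε > 0, {l : Λ | ∃ ρ ∈ X l, ε ≤ ‖g l ρ‖}.Finite) :
    ∃ f : WeakDual ℂ V → ℂ, IsCSigmaFun K f ∧
      (∀ l, ∀ ρ ∈ X l, f ρ = g l ρ) ∧
      (∀ l, ∀ ρ ∈ X l, ∀ α : ℂ, ‖α‖ = 1 → f (α • ρ) = α * g l ρ) := by
  classical
  have hmem : ∀ ω ∈ K, ∃ l, ω ∈ TOrbit (X l) := by
    intro ω hω; rw [hXK] at hω; simpa using hω
  have huniq : ∀ {l l' : Λ} {ω : WeakDual ℂ V},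
      ω ∈ TOrbit (X l) → ω ∈ TOrbit (X l') → l = l' := by
    intro l l' ω h1 h2
    by_contra hne
    exact (hdisj hne).ne_of_mem h1 h2 rfl
  set F : WeakDual ℂ V → ℂ := fun ω =>
    if h : ω ∈ K then
      ω (v (hmem ω h).choose) *
        g (hmem ω h).choose ((ω (v (hmem ω h).choose))⁻¹ • ω)
    else 0 with hFdef
  -- the key value computation
  have hFval : ∀ l, ∀ ρ ∈ X l, ∀ α : ℂ, ‖α‖ = 1 → F (α • ρ) = α * g l ρ := by
    intro l ρ hρ α hα
    have hα0 : α ≠ 0 := by intro h; rw [h] at hα; simp at hα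
    have horb : (α • ρ) ∈ TOrbit (X l) := ⟨α, hα, ρ, hρ, rfl⟩
    have hωK : (α • ρ) ∈ K := by rw [hXK]; exact Set.mem_iUnion.2 ⟨l, horb⟩
    have heq : (hmem (α • ρ) hωK).choose = l :=
      huniq (hmem (α • ρ) hωK).choose_spec horb
    have happ : (α • ρ) (v l) = α := by
      have : (α • ρ) (v l) = α * ρ (v l) := rfl
      rw [this, hv l ρ hρ, mul_one]
    have hsm : (( (α • ρ) (v l))⁻¹ • (α • ρ) : WeakDual ℂ V) = ρ := by
      rw [happ, smul_smul, inv_mul_cancel₀ hα0, one_smul]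
    calc F (α • ρ) = (α • ρ) (v l) * g l (((α • ρ) (v l))⁻¹ • (α • ρ)) := by
          rw [hFdef]; simp only [dif_pos hωK, heq]
      _ = α * g l ρ := by rw [hsm, happ]
  -- structure of F on each orbit
  have horbit : ∀ l, ∀ ω ∈ TOrbit (X l),
      ‖ω (v l)‖ = 1 ∧ ((ω (v l))⁻¹ • ω : WeakDual ℂ V) ∈ X l ∧
        F ω = ω (v l) * g l ((ω (v l))⁻¹ • ω) := by
    intro l ω hω
    obtain ⟨α, hα, ρ, hρ, rfl⟩ := hω
    have hα0 : α ≠ 0 := by intro h; rw [h] at hα; simp at hα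
    have happ : (α • ρ) (v l) = α := by
      have : (α • ρ) (v l) = α * ρ (v l) := rfl
      rw [this, hv l ρ hρ, mul_one]
    have hsm : (( (α • ρ) (v l))⁻¹ • (α • ρ) : WeakDual ℂ V) = ρ := by
      rw [happ, smul_smul, inv_mul_cancel₀ hα0, one_smul]
    refine ⟨by rw [happ]; exact hα, by rw [hsm]; exact hρ, ?_⟩
    rw [hsm, happ]
    exact hFval l ρ hρ α hα
  have hF0 : F 0 = 0 := by rw [hFdef]; simp [dif_neg h0K]
  refine ⟨F, ⟨?_, hF0, ?_⟩, ?_, ?_⟩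
  · -- continuity on K ∪ {0}
    intro ω₀ hω₀
    rcases hω₀ with hω₀ | hω₀
    · -- at a point of K
      obtain ⟨l, hl⟩ := hmem ω₀ hω₀
      obtain ⟨U, hUopen, hUeq⟩ := hXopen l
      have hω₀U : ω₀ ∈ U := (hUeq ▸ hl).1
      have hinter : (K ∪ {0}) ∩ U = TOrbit (X l) := by
        rw [hUeq, Set.inter_comm]
      have h1 : ContinuousWithinAt F (TOrbit (X l)) ω₀ := by
        obtain ⟨hnorm, hXmem, _⟩ := horbit l ω₀ hl
        have hne : ω₀ (v l) ≠ 0 := by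
          intro h; rw [h] at hnorm; simp at hnorm
        have hev : Continuous fun ω : WeakDual ℂ V => ω (v l) :=
          WeakDual.eval_continuous (v l)
        have hm : ContinuousAt (fun ω : WeakDual ℂ V => ((ω (v l))⁻¹ • ω :
            WeakDual ℂ V)) ω₀ :=
          ContinuousAt.smul (hev.continuousAt.inv₀ hne) continuousAt_id
        have hmaps : Set.MapsTo (fun ω : WeakDual ℂ V => ((ω (v l))⁻¹ • ω :
            WeakDual ℂ V)) (TOrbit (X l)) (X l ∪ {0}) :=
          fun ω hω => Or.inl (horbit l ω hω).2.1
        have hg : ContinuousWithinAt (g l) (X l ∪ {0})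
            ((ω₀ (v l))⁻¹ • ω₀) := hgcont l _ (Or.inl hXmem)
        have hcomp : ContinuousWithinAt
            (fun ω : WeakDual ℂ V => g l ((ω (v l))⁻¹ • ω)) (TOrbit (X l)) ω₀ :=
          ContinuousWithinAt.comp (g := g l)
            (f := fun ω : WeakDual ℂ V => ((ω (v l))⁻¹ • ω : WeakDual ℂ V))
            hg hm.continuousWithinAt hmaps
        have hh : ContinuousWithinAt
            (fun ω : WeakDual ℂ V => ω (v l) * g l ((ω (v l))⁻¹ • ω))
            (TOrbit (X l)) ω₀ := hev.continuousWithinAt.mul hcomp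
        exact hh.congr (fun ω hω => (horbit l ω hω).2.2) (horbit l ω₀ hl).2.2
      have h2 : ContinuousWithinAt F ((K ∪ {0}) ∩ U) ω₀ := by
        rw [hinter]; exact h1
      exact (continuousWithinAt_inter (hUopen.mem_nhds hω₀U)).1 h2
    · -- at 0
      rw [Set.mem_singleton_iff] at hω₀
      subst hω₀
      rw [ContinuousWithinAt, hF0]
      rw [Metric.tendsto_nhds]
      intro ε hε
      have hfin := hgc0 ε hε
      set T := hfin.toFinset with hT
      have hsmall : ∀ᶠ ω : WeakDual ℂ V in nhds 0, ∀ l ∈ T, ‖ω (v l)‖ < 1 := by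
        rw [Filter.eventually_all_finset]
        intro l _
        have hc : Continuous fun ω : WeakDual ℂ V => ‖ω (v l)‖ :=
          (WeakDual.eval_continuous (v l)).norm
        have : IsOpen {ω : WeakDual ℂ V | ‖ω (v l)‖ < 1} :=
          isOpen_lt hc continuous_const
        exact this.mem_nhds (by
          show ‖(0 : WeakDual ℂ V) (v l)‖ < 1
          rw [show ((0 : WeakDual ℂ V) (v l)) = 0 from rfl]
          norm_num)
      filter_upwards [eventually_nhdsWithin_of_eventually_nhds hsmall,
        self_mem_nhdsWithin] with ω hsm hωmem
      rcases hωmem with hωK | hω0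
      · obtain ⟨l, hl⟩ := hmem ω hωK
        obtain ⟨α, hα, ρ, hρ, rfl⟩ := hl
        have hval := hFval l ρ hρ α hα
        have happ : (α • ρ) (v l) = α := by
          have : (α • ρ) (v l) = α * ρ (v l) := rfl
          rw [this, hv l ρ hρ, mul_one]
        have hlT : l ∉ T := by
          intro hlT
          have := hsm l hlT
          rw [happ, hα] at this
          exact lt_irrefl 1 this
        have hglρ : ‖g l ρ‖ < ε := by
          by_contra hcon
          push_neg at hcon
          exact hlT (by rw [hT, Set.Finite.mem_toFinset]; exact ⟨ρ, hρ, hcon⟩)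
        rw [dist_zero_right, hval, norm_mul, hα, one_mul]
        exact hglρ
      · rw [Set.mem_singleton_iff] at hω0
        rw [hω0, hF0, dist_self]
        exact hε
  · -- equivariance
    intro β hβ ω hωK
    obtain ⟨l, hl⟩ := hmem ω hωK
    obtain ⟨α, hα, ρ, hρ, rfl⟩ := hl
    have h1 : F (α • ρ) = α * g l ρ := hFval l ρ hρ α hα
    have h2 : β • (α • ρ) = (β * α) • ρ := (smul_smul β α ρ)
    have h3 : F ((β * α) • ρ) = (β * α) * g l ρ :=
      hFval l ρ hρ (β * α) (by rw [norm_mul, hβ, hα, one_mul])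
    rw [h2, h3, h1, mul_assoc]
  · intro l ρ hρ
    have := hFval l ρ hρ 1 (by simp)
    rwa [one_smul, one_mul] at this
  · intro l ρ hρ α hα
    exact hFval l ρ hρ α hα
end

section
/- Let S ⊆ (0, 1] be such that S ∪ {0} is compact in ℝ. For each n ≥ 1 let r_n ∈ C₀(S, ℂ) be r_n(t) = t^{1/(2n+1)}, and let χ : S → ℂ be the constant function 1. Then for every bounded linear functional ψ on the space of bounded functions on S that restricts on C₀(S) to a multiplicative functional with ψ(r_n) ∈ [0,1] for all n and lim_n ψ(r_n) = 1, and for every linear contraction Φ from span(C₀(S) ∪ {χ}) ⊆ ℓ^∞(S) into a Banach space V extending the inclusion of C₀(S) isometrically, any functional ρ ∈ V* of norm at most 1 with ρ(Φ(g)) = ψ(g) for g ∈ C₀(S) satisfies ρ(Φ(χ)) = 1. -/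
open Filter BoundedContinuousFunction

/-! The test function `χ - 2 r_n` has sup norm at most `1`, because `r_n` takes values in
`[0, 1]`. Hence `z := ρ(Φ χ)` satisfies `|z - 2 ψ(r_n)| ≤ 1` for every `n`, and in the limit
`|z - 2| ≤ 1`. Together with `|z| ≤ 1`, the point `z` is at distance at most `1` from both `0`
and `2`, which forces `z = 1`. -/

theorem eq_midpoint_of_dist_le_half {E : Type*} [NormedAddCommGroup E] [NormedSpace ℝ E]
    [StrictConvexSpace ℝ E] {x y z : E} (hx : dist x z ≤ dist x y / 2)
    (hy : dist z y ≤ dist x y / 2) : z = midpoint ℝ x y := by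
  have := dist_triangle x z y
  exact eq_midpoint_of_dist_eq_half (by linarith) (by linarith)

theorem Complex.eq_one_of_norm_le_one_of_norm_sub_two_le_one {z : ℂ} (h₀ : ‖z‖ ≤ 1)
    (h₂ : ‖z - 2‖ ≤ 1) : z = 1 := by
  have hmid : z = midpoint ℝ (0 : ℂ) 2 :=
    eq_midpoint_of_dist_le_half (by norm_num [dist_comm, h₀]) (by simpa [dist_eq_norm] using h₂)
  rw [hmid, midpoint_eq_smul_add]
  norm_num

theorem Complex.norm_one_sub_two_mul_ofReal_le_one {s : ℝ} (hs : s ∈ Set.Icc (0 : ℝ) 1) :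
    ‖1 - 2 * (s : ℂ)‖ ≤ 1 := by
  rw [show (1 : ℂ) - 2 * s = ((1 - 2 * s : ℝ) : ℂ) by push_cast; ring, Complex.norm_real,
    Real.norm_eq_abs, abs_le]
  constructor <;> linarith [hs.1, hs.2]

theorem ContinuousLinearMap.norm_apply_comp_le_of_le_one {𝕜 W V : Type*} [RCLike 𝕜]
    [SeminormedAddCommGroup W] [NormedSpace 𝕜 W] [SeminormedAddCommGroup V] [NormedSpace 𝕜 V]
    (ρ : V →L[𝕜] 𝕜) (hρ : ‖ρ‖ ≤ 1) (Φ : W →ₗ[𝕜] V) (hΦ : ∀ w, ‖Φ w‖ ≤ ‖w‖) (w : W) :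
    ‖ρ (Φ w)‖ ≤ ‖w‖ :=
  calc ‖ρ (Φ w)‖ ≤ 1 * ‖Φ w‖ := ρ.le_of_opNorm_le hρ _
    _ ≤ ‖w‖ := by simpa using hΦ w

theorem stmt_17_general (S : Set ℝ) (hS : S ⊆ Set.Ioc 0 1)
    (r : ℕ → (↥S →ᵇ ℂ))
    (hr : ∀ (n : ℕ) (x : ↥S),
      r n x = (((x : ℝ) ^ ((1 : ℝ) / (2 * (n : ℝ) + 1)) : ℝ) : ℂ))
    (hrC0 : ∀ n, Tendsto (fun x : ↥S => r n x) (cocompact ↥S) (nhds 0))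
    (χ : ↥S →ᵇ ℂ) (hχ : ∀ x : ↥S, χ x = 1)
    {V : Type*} [NormedAddCommGroup V] [NormedSpace ℂ V]
    (W : Submodule ℂ (↥S →ᵇ ℂ))
    (hC0W : ∀ g : ↥S →ᵇ ℂ,
      Tendsto (fun x : ↥S => g x) (cocompact ↥S) (nhds 0) → g ∈ W)
    (hχW : χ ∈ W)
    (ψ : (↥S →ᵇ ℂ) →L[ℂ] ℂ)
    (hψlim : Tendsto (fun n => ψ (r n)) atTop (nhds 1))
    (Φ : W →ₗ[ℂ] V)
    (hΦcontr : ∀ w : W, ‖Φ w‖ ≤ ‖(w : ↥S →ᵇ ℂ)‖)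
    (ρ : V →L[ℂ] ℂ) (hρ : ‖ρ‖ ≤ 1)
    (hcomp : ∀ (g : ↥S →ᵇ ℂ)
      (hg : Tendsto (fun x : ↥S => g x) (cocompact ↥S) (nhds 0)),
      ρ (Φ ⟨g, hC0W g hg⟩) = ψ g) :
    ρ (Φ ⟨χ, hχW⟩) = 1 := by
  have hbound := ρ.norm_apply_comp_le_of_le_one hρ Φ hΦcontr
  have hχ_norm : ‖χ‖ ≤ 1 := (norm_le zero_le_one).2 fun x => by simp [hχ x]
  have hroot_mem (n : ℕ) (x : ↥S) : (x : ℝ) ^ ((1 : ℝ) / (2 * (n : ℝ) + 1)) ∈ Set.Icc (0 : ℝ) 1 :=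
    ⟨Real.rpow_nonneg (hS x.2).1.le _,
      Real.rpow_le_one (hS x.2).1.le (hS x.2).2 (by positivity)⟩
  have hkey (n : ℕ) : ‖ρ (Φ ⟨χ, hχW⟩) - 2 * ψ (r n)‖ ≤ 1 := by
    let w : W := ⟨χ, hχW⟩ - (2 : ℂ) • ⟨r n, hC0W _ (hrC0 n)⟩
    have hw : ‖(w : ↥S →ᵇ ℂ)‖ ≤ 1 := (norm_le zero_le_one).2 fun x => by
      simpa [w, hχ x, hr n x] using Complex.norm_one_sub_two_mul_ofReal_le_one (hroot_mem n x)
    have hρw : ρ (Φ w) = ρ (Φ ⟨χ, hχW⟩) - 2 * ψ (r n) := by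
      simp only [w, map_sub, map_smul, hcomp (r n) (hrC0 n), smul_eq_mul]
    exact hρw ▸ (hbound w).trans hw
  have hlim : Tendsto (fun n => ρ (Φ ⟨χ, hχW⟩) - 2 * ψ (r n)) atTop
      (nhds (ρ (Φ ⟨χ, hχW⟩) - 2)) := by
    simpa using tendsto_const_nhds.sub (hψlim.const_mul (2 : ℂ))
  exact Complex.eq_one_of_norm_le_one_of_norm_sub_two_le_one
    ((hbound _).trans hχ_norm) (le_of_tendsto hlim.norm (Eventually.of_forall hkey))

/-- Lemma 2 of the paper (key computation). Let `S ⊆ (0,1]` with `S ∪ {0}`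
compact, `r_n(t) = t^{1/(2n+1)}` the odd roots and `χ` the constant `1`
function inside `ℓ^∞(S)` (bounded functions on `S`, realized here as bounded
continuous functions since all the relevant functions are continuous). Let `ψ`
be a bounded functional on `ℓ^∞(S)` which is multiplicative on `C₀(S)` (the
functions vanishing at infinity of `S`) with `ψ(r_n) ∈ [0,1]` and
`ψ(r_n) → 1`. Let `Φ` be a linear contraction from the span `W` of
`C₀(S) ∪ {χ}` into a Banach space `V` which is isometric on `C₀(S)`, and let
`ρ ∈ V*` with `‖ρ‖ ≤ 1` and `ρ(Φ g) = ψ(g)` for `g ∈ C₀(S)`.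
Then `ρ(Φ χ) = 1`. -/
theorem stmt_17 (S : Set ℝ) (hS : S ⊆ Set.Ioc 0 1) (hScpt : IsCompact (S ∪ {0}))
    (r : ℕ → (↥S →ᵇ ℂ))
    (hr : ∀ (n : ℕ) (x : ↥S),
      r n x = (((x : ℝ) ^ ((1 : ℝ) / (2 * (n : ℝ) + 1)) : ℝ) : ℂ))
    (hrC0 : ∀ n, Tendsto (fun x : ↥S => r n x) (cocompact ↥S) (nhds 0))
    (χ : ↥S →ᵇ ℂ) (hχ : ∀ x : ↥S, χ x = 1)
    {V : Type*} [NormedAddCommGroup V] [NormedSpace ℂ V] [CompleteSpace V]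
    (W : Submodule ℂ (↥S →ᵇ ℂ))
    (hC0W : ∀ g : ↥S →ᵇ ℂ,
      Tendsto (fun x : ↥S => g x) (cocompact ↥S) (nhds 0) → g ∈ W)
    (hχW : χ ∈ W)
    (hWspan : ∀ w ∈ W, ∃ (g : ↥S →ᵇ ℂ) (c : ℂ),
      Tendsto (fun x : ↥S => g x) (cocompact ↥S) (nhds 0) ∧ w = g + c • χ)
    (ψ : (↥S →ᵇ ℂ) →L[ℂ] ℂ)
    (hψmul : ∀ g₁ g₂ : ↥S →ᵇ ℂ,
      Tendsto (fun x : ↥S => g₁ x) (cocompact ↥S) (nhds 0) →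
      Tendsto (fun x : ↥S => g₂ x) (cocompact ↥S) (nhds 0) →
      ψ (g₁ * g₂) = ψ g₁ * ψ g₂)
    (hψr : ∀ n, ∃ t : ℝ, t ∈ Set.Icc (0 : ℝ) 1 ∧ ψ (r n) = (t : ℂ))
    (hψlim : Tendsto (fun n => ψ (r n)) atTop (nhds 1))
    (Φ : W →ₗ[ℂ] V)
    (hΦcontr : ∀ w : W, ‖Φ w‖ ≤ ‖(w : ↥S →ᵇ ℂ)‖)
    (hΦiso : ∀ (g : ↥S →ᵇ ℂ)
      (hg : Tendsto (fun x : ↥S => g x) (cocompact ↥S) (nhds 0)),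
      ‖Φ ⟨g, hC0W g hg⟩‖ = ‖g‖)
    (ρ : V →L[ℂ] ℂ) (hρ : ‖ρ‖ ≤ 1)
    (hcomp : ∀ (g : ↥S →ᵇ ℂ)
      (hg : Tendsto (fun x : ↥S => g x) (cocompact ↥S) (nhds 0)),
      ρ (Φ ⟨g, hC0W g hg⟩) = ψ g) :
    ρ (Φ ⟨χ, hχW⟩) = 1 :=
  stmt_17_general S hS r hr hrC0 χ hχ W hC0W hχW ψ hψlim Φ hΦcontr ρ hρ hcomp
end
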